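/- Let φ_1,…,φ_r be symmetric polynomials of the shape φ_j(z) = a_j σ_{k_j}(z) − Υ_j(σ_{l_1}(z),…,σ_{l_R}(z)) with a_j nonzero integers, Υ_j ∈ ℤ[s_1,…,s_R], and degrees k_1,…,k_r satisfying 1 ≤ k_1 < k_2 < … < k_r = k. Then for each ε > 0, the number of non-diagonal solutions, i.e. pairs (x,y) with 1 ≤ x_i, y_i ≤ X satisfying φ_j(x) = φ_j(y) (1 ≤ j ≤ r) for which there exists an index j with 1 ≤ j ≤ k such that y_j ∉ {x_1,…,x_k} or x_j ∉ {y_1,…,y_k}, is O(X^{2w(φ)+1+ε}). -/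

import Mathlib

open Finset Asymptotics Filter

/-- The elementary symmetric polynomial `σ_l` evaluated at the integer tuple `x`. -/
def esymm (k l : ℕ) (x : Fin k → ℤ) : ℤ :=
  ∑ s ∈ Finset.powersetCard l (Finset.univ : Finset (Fin k)), ∏ i ∈ s, x i

/-- The number of pairs `(x, y)` of integer `k`-tuples with all entries in `[1, X]`
satisfying the relation `P`. -/
noncomputable def pairCount (k X : ℕ) (P : (Fin k → ℤ) → (Fin k → ℤ) → Prop) : ℕ :=
  Nat.card {p : (Fin k → ℤ) × (Fin k → ℤ) //
    (∀ i, 1 ≤ p.1 i ∧ p.1 i ≤ (X : ℤ)) ∧ (∀ i, 1 ≤ p.2 i ∧ p.2 i ≤ (X : ℤ)) ∧ P p.1 p.2}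

/-- `T_k(X)`: the number of pairs `(x, y)` of integer `k`-tuples with entries in `[1, X]`
for which `y` is a permutation of `x`. -/
noncomputable def permCount (k X : ℕ) : ℕ :=
  pairCount k X (fun x y => ∃ π : Equiv.Perm (Fin k), y = x ∘ π)

/-- The complementary set of exponents `ℛ = {1,…,k} \ {k_1,…,k_r}`. -/
def compSet (k r : ℕ) (kk : Fin r → ℕ) : Finset ℕ :=
  Finset.Icc 1 k \ Finset.image kk Finset.univ

/-!
Fix the values `c` of `σ_l(x)` and `σ_l(y)` for `l ∈ ℛ`; there are `O(X^{2w})` of them. On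
solutions, `c` determines every difference `σ_l(x) − σ_l(y)`, because
`a_j (σ_{k_j}(x) − σ_{k_j}(y)) = Υ_j(c_x) − Υ_j(c_y)`. By Vieta, `∏ (x_m − t) − ∏ (y_m − t)` depends
only on these differences; so if `t = x_i` is not among the `y_m`, then `N = ∏ (y_m − t)` is a
nonzero integer with `|N| ≤ X^k` depending only on `(c, t)`, and every `y_m − t` is one of its
`O(X^ε)` divisors. Once `y` is fixed, all `σ_l(x)` are known, hence so is `∏ (T − x_m)`, and each
`x_m` is among its at most `k` roots. Solutions with some `y_j ∉ {x_1,…,x_k}` are handled by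
exchanging `x` and `y`.
-/

theorem esymm_zero (k : ℕ) (x : Fin k → ℤ) : esymm k 0 x = 1 := by
  simp [esymm]

theorem prod_add_eq_sum_esymm {k : ℕ} (z : Fin k → ℤ) (c : ℤ) :
    ∏ m, (z m + c) = ∑ l ∈ range (k + 1), esymm k l z * c ^ (k - l) := by
  have h := congrArg (Polynomial.eval c) (Multiset.prod_X_add_C_eq_sum_esymm (univ.val.map z))
  simp only [Polynomial.eval_multiset_prod, Multiset.map_map, Polynomial.eval_finsetSum,
    Function.comp_def, Polynomial.eval_add, Polynomial.eval_X, Polynomial.eval_C,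
    Polynomial.eval_mul, Polynomial.eval_pow, Multiset.card_map, Finset.esymm_map_val,
    card_val, card_univ, Fintype.card_fin] at h
  simp only [esymm, add_comm]
  exact h

section Vieta

variable {k : ℕ} {x y x' y' : Fin k → ℤ}

theorem prod_add_eq_of_esymm_eq (h : ∀ l ≤ k, esymm k l x = esymm k l x') (c : ℤ) :
    ∏ m, (x m + c) = ∏ m, (x' m + c) := by
  simp only [prod_add_eq_sum_esymm]
  exact sum_congr rfl fun l hl => by rw [h l (Nat.lt_succ_iff.mp (mem_range.mp hl))]

theorem prod_add_sub_eq_of_esymm_sub_eq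
    (h : ∀ l ≤ k, esymm k l x - esymm k l y = esymm k l x' - esymm k l y') (c : ℤ) :
    ∏ m, (x m + c) - ∏ m, (y m + c) = ∏ m, (x' m + c) - ∏ m, (y' m + c) := by
  simp only [prod_add_eq_sum_esymm, ← sum_sub_distrib, ← sub_mul]
  exact sum_congr rfl fun l hl => by rw [h l (Nat.lt_succ_iff.mp (mem_range.mp hl))]

theorem mem_range_of_esymm_eq (h : ∀ l ≤ k, esymm k l x = esymm k l x') (i : Fin k) :
    x' i ∈ Set.range x := by
  have hzero : ∏ m, (x m + -x' i) = 0 := by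
    rw [prod_add_eq_of_esymm_eq h]
    exact prod_eq_zero (mem_univ i) (add_neg_cancel _)
  obtain ⟨m, -, hm⟩ := prod_eq_zero_iff.mp hzero
  exact ⟨m, by linarith⟩

theorem card_le_pow_of_esymm_eq {s : Finset (Fin k → ℤ)}
    (hs : ∀ x ∈ s, ∀ x' ∈ s, ∀ l ≤ k, esymm k l x = esymm k l x') : #s ≤ k ^ k := by
  obtain rfl | ⟨x, hx⟩ := s.eq_empty_or_nonempty
  · simp
  calc #s ≤ #(Fintype.piFinset fun _ : Fin k => univ.image x) :=
        card_le_card fun x' hx' => Fintype.mem_piFinset.mpr fun i => by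
          obtain ⟨m, hm⟩ := mem_range_of_esymm_eq (hs x hx x' hx') i
          exact mem_image.mpr ⟨m, mem_univ m, hm⟩
    _ ≤ k ^ k := by
        rw [Fintype.card_piFinset, prod_const, card_univ, Fintype.card_fin]
        exact Nat.pow_le_pow_left (card_image_le.trans (by simp)) k

theorem abs_esymm_le {B : ℤ} (hx : ∀ i, |x i| ≤ B) (l : ℕ) :
    |esymm k l x| ≤ k.choose l * B ^ l :=
  calc |esymm k l x| ≤ ∑ s ∈ powersetCard l (univ : Finset (Fin k)), ∏ i ∈ s, |x i| := by
        simp only [esymm, ← abs_prod]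
        exact abs_sum_le_sum_abs _ _
    _ ≤ ∑ s ∈ powersetCard l (univ : Finset (Fin k)), B ^ l :=
        sum_le_sum fun s hs => by
          rw [← (mem_powersetCard.mp hs).2, ← prod_const]
          exact prod_le_prod (fun i _ => abs_nonneg _) fun i _ => hx i
    _ = k.choose l * B ^ l := by
        rw [sum_const, card_powersetCard, card_univ, Fintype.card_fin, nsmul_eq_mul]

end Vieta

theorem Int.card_divisors (z : ℤ) : #z.divisors = 2 * #z.natAbs.divisors := by
  rw [Int.divisors, card_disjUnion, card_map, card_map, two_mul]

theorem card_le_card_divisors_pow_of_prod_sub_eq {k : ℕ} {s : Finset (Fin k → ℤ)} {t N : ℤ}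
    (hN : N ≠ 0) (hs : ∀ y ∈ s, ∏ m, (y m - t) = N) : #s ≤ #N.divisors ^ k :=
  calc #s ≤ #(Fintype.piFinset fun _ : Fin k => N.divisors.image (t + ·)) :=
        card_le_card fun y hy => Fintype.mem_piFinset.mpr fun m =>
          mem_image.mpr ⟨y m - t, Int.mem_divisors.mpr
            ⟨hs y hy ▸ dvd_prod_of_mem _ (mem_univ m), hN⟩, by ring⟩
    _ ≤ #N.divisors ^ k := by
        rw [Fintype.card_piFinset, prod_const, card_univ, Fintype.card_fin]
        exact Nat.pow_le_pow_left card_image_le k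

theorem Nat.succ_le_mul_two_rpow {δ : ℝ} {M : ℕ} (hM : 1 ≤ M) (hδM : 1 ≤ δ * M) (a : ℕ) :
    (a + 1 : ℝ) ≤ M * 2 ^ (a * δ) := by
  have hq : a + 1 ≤ M * 2 ^ (a / M) :=
    (Nat.lt_mul_div_succ a hM).trans_le (Nat.mul_le_mul_left M (Nat.lt_two_pow_self))
  have hdiv : ((a / M : ℕ) : ℝ) ≤ a * δ :=
    calc ((a / M : ℕ) : ℝ) ≤ a / M := Nat.cast_div_le
      _ ≤ a * δ := by
        rw [div_le_iff₀ (by positivity)]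
        nlinarith [(Nat.cast_nonneg a : (0 : ℝ) ≤ a)]
  calc (a + 1 : ℝ) ≤ M * 2 ^ (a / M) := by exact_mod_cast hq
    _ = M * (2 : ℝ) ^ ((a / M : ℕ) : ℝ) := by rw [Real.rpow_natCast]
    _ ≤ M * 2 ^ (a * δ) := by gcongr; norm_num

theorem Nat.succ_le_mul_rpow_of_two_le {δ : ℝ} (hδ : 0 < δ) {M : ℕ} (hM : 1 ≤ M)
    (hδM : 1 ≤ δ * M) {p : ℕ} (hp : 2 ≤ p) (a : ℕ) :
    (a + 1 : ℝ) ≤ (if p ≤ 2 ^ M then (M : ℝ) else 1) * (p : ℝ) ^ (a * δ) := by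
  have hp' : (2 : ℝ) ≤ p := by exact_mod_cast hp
  split_ifs with hpM
  · exact (Nat.succ_le_mul_two_rpow hM hδM a).trans (by gcongr)
  · have hpδ : 2 ≤ (p : ℝ) ^ δ :=
      calc (2 : ℝ) = 2 ^ (1 : ℝ) := (Real.rpow_one 2).symm
        _ ≤ 2 ^ (M * δ) := by gcongr <;> linarith
        _ = ((2 : ℝ) ^ M) ^ δ := by rw [← Real.rpow_natCast, ← Real.rpow_mul (by norm_num)]
        _ ≤ (p : ℝ) ^ δ := by gcongr; exact_mod_cast (not_le.mp hpM).le
    calc (a + 1 : ℝ) ≤ 2 ^ a := by exact_mod_cast Nat.lt_two_pow_self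
      _ ≤ ((p : ℝ) ^ δ) ^ a := by gcongr
      _ = 1 * (p : ℝ) ^ (a * δ) := by
        rw [one_mul, ← Real.rpow_natCast, ← Real.rpow_mul (by positivity), mul_comm]

theorem Nat.exists_card_divisors_le_mul_rpow {δ : ℝ} (hδ : 0 < δ) :
    ∃ C : ℝ, ∀ n : ℕ, n ≠ 0 → (#n.divisors : ℝ) ≤ C * n ^ δ := by
  obtain ⟨M, hM, hδM⟩ : ∃ M : ℕ, 1 ≤ M ∧ 1 ≤ δ * M := by
    refine ⟨⌈δ⁻¹⌉₊ + 1, by omega, ?_⟩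
    calc 1 = δ * δ⁻¹ := (mul_inv_cancel₀ hδ.ne').symm
      _ ≤ δ * ↑(⌈δ⁻¹⌉₊ + 1) := by gcongr; push_cast; linarith [Nat.le_ceil δ⁻¹]
  -- the factor `(a_p + 1) / p ^ (a_p δ)` of `#n.divisors / n ^ δ` is at most `M`, and at most `1`
  -- once `p > 2 ^ M`
  refine ⟨M ^ (2 ^ M + 1), fun n hn => ?_⟩
  have hsmall : (∏ p ∈ n.primeFactors, if p ≤ 2 ^ M then (M : ℝ) else 1) ≤ M ^ (2 ^ M + 1) := by
    rw [prod_ite, prod_const, prod_const_one, mul_one]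
    refine pow_le_pow_right₀ (by exact_mod_cast hM)
      ((card_le_card fun p hp => ?_).trans (card_range _).le)
    exact mem_range.mpr (Nat.lt_succ_of_le (mem_filter.mp hp).2)
  have hlarge : ∏ p ∈ n.primeFactors, (p : ℝ) ^ (n.factorization p * δ) = n ^ δ := by
    conv_rhs => rw [← Nat.prod_factorization_pow_eq_self hn]
    rw [Finsupp.prod, Nat.support_factorization, Nat.cast_prod,
      ← Real.finsetProd_rpow _ _ fun p _ => by positivity]
    refine prod_congr rfl fun p _ => ?_
    rw [Nat.cast_pow, ← Real.rpow_natCast, ← Real.rpow_mul (by positivity)]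
  calc (#n.divisors : ℝ) = ∏ p ∈ n.primeFactors, ((n.factorization p : ℝ) + 1) := by
        rw [Nat.card_divisors hn]; push_cast; rfl
    _ ≤ ∏ p ∈ n.primeFactors,
          (if p ≤ 2 ^ M then (M : ℝ) else 1) * (p : ℝ) ^ (n.factorization p * δ) :=
        prod_le_prod (fun _ _ => by positivity) fun p hp =>
          Nat.succ_le_mul_rpow_of_two_le hδ hM hδM (Nat.prime_of_mem_primeFactors hp).two_le _
    _ ≤ M ^ (2 ^ M + 1) * n ^ δ := by
        rw [prod_mul_distrib, hlarge]; gcongr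

def maxDivisorCount (M : ℕ) : ℕ :=
  (Icc 1 M).sup fun n => #n.divisors

theorem card_divisors_le_maxDivisorCount {n M : ℕ} (hn : n ≠ 0) (hnM : n ≤ M) :
    #n.divisors ≤ maxDivisorCount M :=
  le_sup (f := fun n => #n.divisors) (mem_Icc.mpr ⟨Nat.one_le_iff_ne_zero.mpr hn, hnM⟩)

theorem exists_maxDivisorCount_pow_le_mul_rpow (k : ℕ) {ε : ℝ} (hε : 0 < ε) :
    ∃ C : ℝ, ∀ X : ℕ, 1 ≤ X → (maxDivisorCount (X ^ k) : ℝ) ^ k ≤ C * X ^ ε := by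
  set δ := ε / (k * k + 1) with hδ
  have hδpos : 0 < δ := by positivity
  have hkδ : k * k * δ ≤ ε := by
    rw [hδ, mul_div_assoc', div_le_iff₀ (by positivity)]
    nlinarith
  obtain ⟨C, hC⟩ := Nat.exists_card_divisors_le_mul_rpow hδpos
  have hC0 : 0 ≤ C := by
    have h1 := hC 1 one_ne_zero
    simp only [Nat.divisors_one, card_singleton, Nat.cast_one, Real.one_rpow, mul_one] at h1
    linarith
  refine ⟨C ^ k, fun X hX => ?_⟩
  have hX' : (1 : ℝ) ≤ X := by exact_mod_cast hX
  obtain ⟨n, hn, hnmax⟩ := exists_mem_eq_sup (Icc 1 (X ^ k))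
    ⟨1, mem_Icc.mpr ⟨le_rfl, Nat.one_le_pow _ _ hX⟩⟩ fun n => #n.divisors
  obtain ⟨hn1, hnX⟩ := mem_Icc.mp hn
  have hmax : (maxDivisorCount (X ^ k) : ℝ) ≤ C * (X : ℝ) ^ (k * δ) :=
    calc (maxDivisorCount (X ^ k) : ℝ) = #n.divisors := by rw [maxDivisorCount, hnmax]
      _ ≤ C * n ^ δ := hC n (by omega)
      _ ≤ C * ((X ^ k : ℕ) : ℝ) ^ δ := by gcongr
      _ = C * (X : ℝ) ^ (k * δ) := by
          rw [Nat.cast_pow, ← Real.rpow_natCast, ← Real.rpow_mul (by positivity)]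
  calc (maxDivisorCount (X ^ k) : ℝ) ^ k ≤ (C * (X : ℝ) ^ (k * δ)) ^ k := by gcongr
    _ = C ^ k * (X : ℝ) ^ (k * k * δ) := by
        rw [mul_pow, ← Real.rpow_natCast, ← Real.rpow_natCast, ← Real.rpow_mul (by positivity)]
        ring_nf
    _ ≤ C ^ k * X ^ ε := by gcongr

noncomputable def intBox (k X : ℕ) : Finset (Fin k → ℤ) :=
  Fintype.piFinset fun _ => Icc 1 (X : ℤ)

open Classical in
theorem pairCount_eq_card_filter (k X : ℕ) (P : (Fin k → ℤ) → (Fin k → ℤ) → Prop) :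
    pairCount k X P = #((intBox k X ×ˢ intBox k X).filter fun p => P p.1 p.2) := by
  rw [pairCount, ← Nat.card_eq_finsetCard]
  refine Nat.card_congr (Equiv.subtypeEquivRight fun p => ?_)
  simp only [intBox, mem_filter, mem_product, Fintype.mem_piFinset, mem_Icc, and_assoc]

theorem natAbs_prod_sub_le {k X : ℕ} {y : Fin k → ℤ} (hy : y ∈ intBox k X) {t : ℤ} (ht1 : 1 ≤ t)
    (htX : t ≤ X) : (∏ m, (y m - t)).natAbs ≤ X ^ k := by
  rw [show (∏ m, (y m - t)).natAbs = ∏ m, (y m - t).natAbs from map_prod Int.natAbsHom _ _]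
  refine (prod_le_pow_card _ _ _ fun m _ => ?_).trans (by rw [card_univ, Fintype.card_fin])
  have := mem_Icc.mp (Fintype.mem_piFinset.mp hy m)
  omega

section Cells

noncomputable def compEsymm {k r : ℕ} (kk : Fin r → ℕ) (x : Fin k → ℤ) :
    {l // l ∈ compSet k r kk} → ℤ :=
  fun l => esymm k l.1 x

noncomputable def compBox (k : ℕ) {r : ℕ} (kk : Fin r → ℕ) (X : ℕ) :
    Finset ({l // l ∈ compSet k r kk} → ℤ) :=
  Fintype.piFinset fun l => Icc (-(k.choose l * X ^ l.1 : ℤ)) (k.choose l * X ^ l.1)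

variable {k r : ℕ} {kk : Fin r → ℕ}

theorem compEsymm_mem_compBox {X : ℕ} {x : Fin k → ℤ} (hx : x ∈ intBox k X) :
    compEsymm kk x ∈ compBox k kk X := by
  refine Fintype.mem_piFinset.mpr fun l => mem_Icc.mpr (abs_le.mp (abs_esymm_le (fun i => ?_) _))
  have := mem_Icc.mp (Fintype.mem_piFinset.mp hx i)
  exact abs_le.mpr ⟨by linarith, this.2⟩

theorem card_compBox_le {X : ℕ} (hX : 1 ≤ X) :
    #(compBox k kk X) ≤ (3 * 2 ^ k) ^ k * X ^ ∑ l ∈ compSet k r kk, l := by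
  have hfactor : ∀ l : {l // l ∈ compSet k r kk},
      #(Icc (-(k.choose l * X ^ l.1 : ℤ)) (k.choose l * X ^ l.1)) ≤ 3 * 2 ^ k * X ^ l.1 := by
    intro l
    have hchoose := Nat.choose_le_two_pow k l
    have hXl := Nat.one_le_pow l.1 X hX
    have h1 : (k.choose l * X ^ l.1 : ℤ) ≤ 2 ^ k * X ^ l.1 := by
      exact_mod_cast Nat.mul_le_mul_right _ hchoose
    have h2 : (1 : ℤ) ≤ 2 ^ k * X ^ l.1 := by
      exact_mod_cast Nat.mul_le_mul Nat.one_le_two_pow hXl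
    rw [Int.card_Icc, Int.toNat_le]
    push_cast
    linarith
  have hcard : #(compSet k r kk) ≤ k :=
    (card_le_card sdiff_subset).trans (by simp)
  calc #(compBox k kk X) ≤ ∏ l : {l // l ∈ compSet k r kk}, 3 * 2 ^ k * X ^ l.1 := by
        rw [compBox, Fintype.card_piFinset]
        exact prod_le_prod' fun l _ => hfactor l
    _ = (3 * 2 ^ k) ^ #(compSet k r kk) * X ^ ∑ l ∈ compSet k r kk, l := by
        rw [prod_coe_sort (compSet k r kk) fun l => 3 * 2 ^ k * X ^ l, prod_mul_distrib,
          prod_const, prod_pow_eq_pow_sum]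
    _ ≤ (3 * 2 ^ k) ^ k * X ^ ∑ l ∈ compSet k r kk, l := by
        exact Nat.mul_le_mul_right _ (Nat.pow_le_pow_right (by positivity) hcard)

def CompEsymmDetermines (kk : Fin r → ℕ) (φ : Fin r → (Fin k → ℤ) → ℤ) : Prop :=
  ∀ ⦃x y x' y' : Fin k → ℤ⦄, (∀ j, φ j x = φ j y) → (∀ j, φ j x' = φ j y') →
    compEsymm kk x = compEsymm kk x' → compEsymm kk y = compEsymm kk y' →
    ∀ l ≤ k, esymm k l x - esymm k l y = esymm k l x' - esymm k l y'

theorem CompEsymmDetermines.of_ne_zero {a : Fin r → ℤ}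
    {Υ : Fin r → MvPolynomial {l // l ∈ compSet k r kk} ℤ} {φ : Fin r → (Fin k → ℤ) → ℤ}
    (ha : ∀ j, a j ≠ 0)
    (hφ : ∀ j z, φ j z =
      a j * esymm k (kk j) z - MvPolynomial.eval (fun l => esymm k l.1 z) (Υ j)) :
    CompEsymmDetermines kk φ := by
  intro x y x' y' hxy hxy' hx hy l hl
  obtain rfl | hl0 := Nat.eq_zero_or_pos l
  · simp only [esymm_zero]
  by_cases hR : l ∈ compSet k r kk
  · rw [show esymm k l x = esymm k l x' from congrFun hx ⟨l, hR⟩,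
      show esymm k l y = esymm k l y' from congrFun hy ⟨l, hR⟩]
  have hK : l ∈ univ.image kk := by
    by_contra h
    exact hR (mem_sdiff.mpr ⟨mem_Icc.mpr ⟨hl0, hl⟩, h⟩)
  obtain ⟨j, -, rfl⟩ := mem_image.mp hK
  have hφ' : ∀ z, φ j z = a j * esymm k (kk j) z - MvPolynomial.eval (compEsymm kk z) (Υ j) :=
    hφ j
  have h := hxy j
  have h' := hxy' j
  rw [hφ', hφ'] at h h'
  rw [← hx, ← hy] at h'
  exact mul_left_cancel₀ (ha j) (by linear_combination h - h')

open Classical in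
noncomputable def nondiagCell (kk : Fin r → ℕ) (φ : Fin r → (Fin k → ℤ) → ℤ) (X : ℕ)
    (c : ({l // l ∈ compSet k r kk} → ℤ) × ({l // l ∈ compSet k r kk} → ℤ)) (t : ℤ) :
    Finset ((Fin k → ℤ) × (Fin k → ℤ)) :=
  (intBox k X ×ˢ intBox k X).filter fun p => (∀ j, φ j p.1 = φ j p.2) ∧
    (compEsymm kk p.1, compEsymm kk p.2) = c ∧ t ∈ Set.range p.1 ∧ t ∉ Set.range p.2

variable {φ : Fin r → (Fin k → ℤ) → ℤ} {X : ℕ}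
  {c : ({l // l ∈ compSet k r kk} → ℤ) × ({l // l ∈ compSet k r kk} → ℤ)} {t : ℤ}
  {p q : (Fin k → ℤ) × (Fin k → ℤ)}

theorem esymm_sub_eq_of_mem_nondiagCell (hφ : CompEsymmDetermines kk φ)
    (hp : p ∈ nondiagCell kk φ X c t) (hq : q ∈ nondiagCell kk φ X c t) (l : ℕ) (hl : l ≤ k) :
    esymm k l p.1 - esymm k l p.2 = esymm k l q.1 - esymm k l q.2 := by
  obtain ⟨-, hpφ, hpc, -⟩ := mem_filter.mp hp
  obtain ⟨-, hqφ, hqc, -⟩ := mem_filter.mp hq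
  rw [← hqc, Prod.ext_iff] at hpc
  exact hφ hpφ hqφ hpc.1 hpc.2 l hl

theorem prod_sub_eq_of_mem_nondiagCell (hφ : CompEsymmDetermines kk φ)
    (hp : p ∈ nondiagCell kk φ X c t) (hq : q ∈ nondiagCell kk φ X c t) :
    ∏ m, (p.2 m - t) = ∏ m, (q.2 m - t) := by
  have root : ∀ x : Fin k → ℤ, t ∈ Set.range x → ∏ m, (x m + -t) = 0 := by
    rintro x ⟨i, rfl⟩
    exact prod_eq_zero (mem_univ i) (add_neg_cancel _)
  have h := prod_add_sub_eq_of_esymm_sub_eq (esymm_sub_eq_of_mem_nondiagCell hφ hp hq) (-t)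
  rw [root _ (mem_filter.mp hp).2.2.2.1, root _ (mem_filter.mp hq).2.2.2.1] at h
  simpa only [sub_eq_add_neg, zero_add, neg_inj] using h

theorem card_nondiagCell_le (hφ : CompEsymmDetermines kk φ) :
    #(nondiagCell kk φ X c t) ≤ k ^ k * (2 * maxDivisorCount (X ^ k)) ^ k := by
  set s := nondiagCell kk φ X c t
  have hfibre : ∀ y ∈ s.image Prod.snd, #(s.filter (·.2 = y)) ≤ k ^ k := by
    intro y _
    rw [← card_image_of_injOn (f := Prod.fst) fun p hp q hq hpq =>
      Prod.ext hpq ((mem_filter.mp hp).2.trans (mem_filter.mp hq).2.symm)]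
    refine card_le_pow_of_esymm_eq ?_
    simp only [mem_image, mem_filter]
    rintro _ ⟨p, ⟨hp, hpy⟩, rfl⟩ _ ⟨q, ⟨hq, hqy⟩, rfl⟩ l hl
    simpa only [hpy, hqy, sub_left_inj] using esymm_sub_eq_of_mem_nondiagCell hφ hp hq l hl
  have hsnd : #(s.image Prod.snd) ≤ (2 * maxDivisorCount (X ^ k)) ^ k := by
    obtain hs | ⟨p, hp⟩ := s.eq_empty_or_nonempty
    · simp [hs]
    obtain ⟨⟨hpx, hpy⟩, -, -, ⟨i, hi⟩, hpt⟩ := by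
      simpa only [s, nondiagCell, mem_filter, mem_product] using hp
    have ht := mem_Icc.mp (Fintype.mem_piFinset.mp hpx i)
    rw [hi] at ht
    set N := ∏ m, (p.2 m - t)
    have hN : N ≠ 0 := prod_ne_zero_iff.mpr fun m _ h => hpt ⟨m, by linarith [sub_eq_zero.mp h]⟩
    calc #(s.image Prod.snd) ≤ #N.divisors ^ k := by
          refine card_le_card_divisors_pow_of_prod_sub_eq (t := t) hN ?_
          simp only [mem_image]
          rintro _ ⟨q, hq, rfl⟩
          exact prod_sub_eq_of_mem_nondiagCell hφ hq hp
      _ ≤ (2 * maxDivisorCount (X ^ k)) ^ k := by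
          rw [Int.card_divisors]
          gcongr
          exact card_divisors_le_maxDivisorCount (Int.natAbs_ne_zero.mpr hN)
            (natAbs_prod_sub_le hpy ht.1 ht.2)
  calc #s ≤ k ^ k * #(s.image Prod.snd) := card_le_mul_card_image _ _ hfibre
    _ ≤ k ^ k * (2 * maxDivisorCount (X ^ k)) ^ k := Nat.mul_le_mul_left _ hsnd

noncomputable def nondiagCells (kk : Fin r → ℕ) (φ : Fin r → (Fin k → ℤ) → ℤ) (X : ℕ) :
    Finset ((Fin k → ℤ) × (Fin k → ℤ)) :=
  ((compBox k kk X ×ˢ compBox k kk X) ×ˢ Icc 1 (X : ℤ)).biUnion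
    fun ct => nondiagCell kk φ X ct.1 ct.2

theorem mk_mem_nondiagCells {x y : Fin k → ℤ} (hx : x ∈ intBox k X) (hy : y ∈ intBox k X)
    (hxy : ∀ j, φ j x = φ j y) {i : Fin k} (hi : x i ∉ Set.range y) :
    (x, y) ∈ nondiagCells kk φ X := by
  refine mem_biUnion.mpr ⟨((compEsymm kk x, compEsymm kk y), x i), ?_, ?_⟩
  · exact mem_product.mpr ⟨mem_product.mpr ⟨compEsymm_mem_compBox hx, compEsymm_mem_compBox hy⟩,
      Fintype.mem_piFinset.mp hx i⟩
  · exact mem_filter.mpr ⟨mem_product.mpr ⟨hx, hy⟩, hxy, rfl, ⟨i, rfl⟩, hi⟩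

theorem card_nondiagCells_le (hφ : CompEsymmDetermines kk φ) :
    #(nondiagCells kk φ X) ≤
      #(compBox k kk X) ^ 2 * X * (k ^ k * (2 * maxDivisorCount (X ^ k)) ^ k) := by
  refine card_biUnion_le.trans ((sum_le_card_nsmul _ _ _ fun ct _ =>
    card_nondiagCell_le hφ).trans (le_of_eq ?_))
  rw [smul_eq_mul, card_product, card_product, Int.card_Icc, sq]
  simp

theorem pairCount_nondiag_le (hφ : CompEsymmDetermines kk φ) :
    pairCount k X (fun x y => (∀ j, φ j x = φ j y) ∧
        ∃ j : Fin k, y j ∉ Set.range x ∨ x j ∉ Set.range y) ≤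
      2 * (#(compBox k kk X) ^ 2 * X * (k ^ k * (2 * maxDivisorCount (X ^ k)) ^ k)) := by
  set U := nondiagCells kk φ X
  rw [pairCount_eq_card_filter]
  refine (card_le_card (t := U ∪ U.image Prod.swap) ?_).trans ?_
  · rintro ⟨x, y⟩ hp
    obtain ⟨hbox, hxy, j, hj | hj⟩ := by simpa only [mem_filter, mem_product] using hp
    · refine mem_union_right _ (mem_image.mpr ⟨(y, x), ?_, rfl⟩)
      exact mk_mem_nondiagCells hbox.2 hbox.1 (fun j => (hxy j).symm) hj
    · exact mem_union_left _ (mk_mem_nondiagCells hbox.1 hbox.2 hxy hj)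
  calc #(U ∪ U.image Prod.swap) ≤ #U + #U :=
        (card_union_le _ _).trans (Nat.add_le_add_left card_image_le _)
    _ ≤ _ := by linarith [card_nondiagCells_le (X := X) hφ]

end Cells

theorem sum_Icc_one_natCast (k : ℕ) : ∑ i ∈ Icc 1 k, (i : ℝ) = k * (k + 1) / 2 := by
  induction k with
  | zero => simp
  | succ n ih =>
    rw [sum_Icc_succ_top (by omega), ih]
    push_cast
    ring

theorem sum_compSet_eq {k r : ℕ} (hr : 0 < r) {kk : Fin r → ℕ} (hmono : StrictMono kk)
    (hfirst : 1 ≤ kk ⟨0, hr⟩) (hlast : kk ⟨r - 1, Nat.sub_lt hr Nat.one_pos⟩ = k) :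
    ((∑ l ∈ compSet k r kk, l : ℕ) : ℝ) = (k * (k + 1) : ℝ) / 2 - ∑ j, (kk j : ℝ) := by
  have himg : univ.image kk ⊆ Icc 1 k := by
    intro m hm
    obtain ⟨j, -, rfl⟩ := mem_image.mp hm
    exact mem_Icc.mpr ⟨hfirst.trans (hmono.monotone (Fin.mk_le_mk.mpr (Nat.zero_le _))),
      hlast ▸ hmono.monotone (Fin.le_iff_val_le_val.mpr (Nat.le_sub_one_of_lt j.isLt))⟩
  rw [Nat.cast_sum, compSet, sum_sdiff_eq_sub himg, sum_image fun _ _ _ _ h => hmono.injective h,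
    sum_Icc_one_natCast]

/-- Nonlinear analogue of the bound (2.11). With
`φ_j(z) = a_j σ_{k_j}(z) − Υ_j(σ_{l_1}(z),…,σ_{l_R}(z))`, the number of non-diagonal
solutions, i.e. pairs `(x,y)` with `1 ≤ x_i, y_i ≤ X` satisfying `φ_j(x) = φ_j(y)` for all
`j`, for which some `y_j` avoids `{x_1,…,x_k}` or some `x_j` avoids `{y_1,…,y_k}`, is
`O(X^{2w(φ)+1+ε})`. -/
theorem nondiagonal_bound_nonlinear (k r : ℕ) (hr : 0 < r) (kk : Fin r → ℕ)
    (hmono : StrictMono kk) (hfirst : 1 ≤ kk ⟨0, hr⟩)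
    (hlast : kk ⟨r - 1, Nat.sub_lt hr Nat.one_pos⟩ = k)
    (a : Fin r → ℤ) (ha : ∀ j, a j ≠ 0)
    (Υ : Fin r → MvPolynomial {l // l ∈ compSet k r kk} ℤ)
    (φ : Fin r → (Fin k → ℤ) → ℤ)
    (hφ : ∀ j z, φ j z =
      a j * esymm k (kk j) z - MvPolynomial.eval (fun l => esymm k l.1 z) (Υ j))
    (ε : ℝ) (hε : 0 < ε) :
    (fun X : ℕ =>
        (pairCount k X (fun x y => (∀ j, φ j x = φ j y) ∧
          ∃ j : Fin k, y j ∉ Set.range x ∨ x j ∉ Set.range y) : ℝ))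
      =O[atTop]
      fun X : ℕ =>
        (X : ℝ) ^ (2 * ((k * (k + 1) : ℝ) / 2 - (∑ j, (kk j : ℝ))) + 1 + ε) := by
  obtain ⟨C, hC⟩ := exists_maxDivisorCount_pow_le_mul_rpow k hε
  rw [← sum_compSet_eq hr hmono hfirst hlast]
  set w := ∑ l ∈ compSet k r kk, l
  refine isBigO_iff.mpr ⟨2 * (3 * 2 ^ k) ^ (2 * k) * (k ^ k * 2 ^ k * C), ?_⟩
  filter_upwards [eventually_ge_atTop 1] with X hX
  have hX' : (0 : ℝ) < X := by exact_mod_cast hX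
  rw [Real.norm_of_nonneg (by positivity), Real.norm_of_nonneg (by positivity)]
  refine (Nat.cast_le.mpr (pairCount_nondiag_le (CompEsymmDetermines.of_ne_zero ha hφ))).trans ?_
  have hbox : (#(compBox k kk X) : ℝ) ≤ (3 * 2 ^ k) ^ k * X ^ w := by
    exact_mod_cast card_compBox_le hX
  have hexp : (X : ℝ) ^ (2 * (w : ℝ) + 1 + ε) = (X ^ w) ^ 2 * X * X ^ ε := by
    rw [Real.rpow_add hX', Real.rpow_add hX', Real.rpow_one, ← pow_mul, mul_comm w,
      ← Real.rpow_natCast, Nat.cast_mul, Nat.cast_ofNat]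
  calc _ ≤ 2 * (((3 * 2 ^ k) ^ k * X ^ w) ^ 2 * X * (k ^ k * (2 ^ k * (C * X ^ ε)))) := by
        push_cast
        rw [mul_pow 2]
        gcongr
        exact hC X hX
    _ = _ := by rw [hexp]; ring
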